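/- Let n ≥ 1 and suppose u : ℝ × (Fin n → ℝ) → (Fin n → ℝ), π, l : ℝ × (Fin n → ℝ) → (Fin n → ℝ), k : ℝ × (Fin n → ℝ) → ℝ are continuously differentiable and satisfy at every (t,x): u_i = −Σ_a π_a ∂_i l_a − ∂_i k, ∂ₜπ_a + Σ_j u_j ∂_j π_a = 0, and ∂ₜl_a + Σ_j u_j ∂_j l_a = 0. Define π' := −l, l' := π, and k' := k + Σ_a π_a l_a. Then (π', l', k') is again a Clebsch representation of the same velocity field: u_i = −Σ_a π'_a ∂_i l'_a − ∂_i k', with ∂ₜπ'_a + Σ_j u_j ∂_j π'_a = 0 and ∂ₜl'_a + Σ_j u_j ∂_j l'_a = 0 at every (t,x). Hence the Clebsch extremal system is symmetric under exchanging the roles of π and l up to a gauge transformation of k. -/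

import Mathlib

/-!
By the product rule `∇(Σ_a π_a l_a) = Σ_a (π_a ∇l_a + l_a ∇π_a)`, so adding `Σ_a π_a l_a` to `k`
trades the term `-π ∇l` of the Clebsch representation for `l ∇π`. The material derivative is
linear, so `-l` is advected because `l` is.
-/

open Finset

section ProductRule

variable {E ι : Type*} [NormedAddCommGroup E] [NormedSpace ℝ E] [Fintype ι]

theorem fderiv_sum_mul_apply {f g : ι → E → ℝ} {p : E}
    (hf : ∀ a, DifferentiableAt ℝ (f a) p) (hg : ∀ a, DifferentiableAt ℝ (g a) p) (v : E) :
    fderiv ℝ (fun q => ∑ a, f a q * g a q) p v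
      = ∑ a, (f a p * fderiv ℝ (g a) p v + g a p * fderiv ℝ (f a) p v) := by
  rw [fderiv_fun_sum fun a _ => (hf a).fun_mul (hg a), _root_.sum_apply]
  refine sum_congr rfl fun a _ => ?_
  rw [fderiv_fun_mul (hf a) (hg a)]
  simp only [add_apply, smul_apply, smul_eq_mul]

theorem clebsch_sum_exchange {π l : ι → E → ℝ} {k : E → ℝ} {p : E}
    (hπ : ∀ a, DifferentiableAt ℝ (π a) p) (hl : ∀ a, DifferentiableAt ℝ (l a) p)
    (hk : DifferentiableAt ℝ k p) (v : E) :
    -(∑ a, π a p * fderiv ℝ (l a) p v) - fderiv ℝ k p v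
      = -(∑ a, -l a p * fderiv ℝ (π a) p v)
          - fderiv ℝ (fun q => k q + ∑ a, π a q * l a q) p v := by
  have hsum : DifferentiableAt ℝ (fun q => ∑ a, π a q * l a q) p :=
    DifferentiableAt.fun_sum fun a _ => (hπ a).fun_mul (hl a)
  rw [fderiv_fun_add hk hsum, add_apply, fderiv_sum_mul_apply hπ hl,
    sum_add_distrib]
  simp only [neg_mul, sum_neg_distrib]
  ring

end ProductRule

section MaterialDerivative

variable {ι : Type*} [Fintype ι] [DecidableEq ι]

/-- The material derivative `Df/Dt = ∂ₜf + u · ∇f`; the first coordinate of space-time is time. -/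
noncomputable def materialDeriv (u : ℝ × (ι → ℝ) → ι → ℝ) (f : ℝ × (ι → ℝ) → ℝ)
    (p : ℝ × (ι → ℝ)) : ℝ :=
  fderiv ℝ f p (1, 0) + ∑ j, u p j * fderiv ℝ f p (0, Pi.single j 1)

theorem materialDeriv_neg (u : ℝ × (ι → ℝ) → ι → ℝ) (f : ℝ × (ι → ℝ) → ℝ)
    (p : ℝ × (ι → ℝ)) :
    materialDeriv u (fun q => -f q) p = -materialDeriv u f p := by
  simp only [materialDeriv, fderiv_fun_neg, neg_apply, mul_neg, sum_neg_distrib, neg_add]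

end MaterialDerivative

theorem clebsch_exchange_symmetry_general
    {n : ℕ}
    (u π l : ℝ × (Fin n → ℝ) → (Fin n → ℝ))
    (k : ℝ × (Fin n → ℝ) → ℝ)
    (hπ : ContDiff ℝ 1 π)
    (hl : ContDiff ℝ 1 l) (hk : ContDiff ℝ 1 k)
    (hclebsch : ∀ (p : ℝ × (Fin n → ℝ)) (i : Fin n),
      u p i = -(∑ a, π p a * fderiv ℝ (fun q => l q a) p (0, Pi.single i 1))
              - fderiv ℝ k p (0, Pi.single i 1))
    (hadvπ : ∀ (p : ℝ × (Fin n → ℝ)) (a : Fin n),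
      fderiv ℝ (fun q => π q a) p (1, 0)
        + ∑ j, u p j * fderiv ℝ (fun q => π q a) p (0, Pi.single j 1) = 0)
    (hadvl : ∀ (p : ℝ × (Fin n → ℝ)) (a : Fin n),
      fderiv ℝ (fun q => l q a) p (1, 0)
        + ∑ j, u p j * fderiv ℝ (fun q => l q a) p (0, Pi.single j 1) = 0) :
    (∀ (p : ℝ × (Fin n → ℝ)) (i : Fin n),
      u p i = -(∑ a, (-(l p a)) * fderiv ℝ (fun q => π q a) p (0, Pi.single i 1))
              - fderiv ℝ (fun q => k q + ∑ a, π q a * l q a) p (0, Pi.single i 1)) ∧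
    (∀ (p : ℝ × (Fin n → ℝ)) (a : Fin n),
      fderiv ℝ (fun q => -(l q a)) p (1, 0)
        + ∑ j, u p j * fderiv ℝ (fun q => -(l q a)) p (0, Pi.single j 1) = 0) ∧
    (∀ (p : ℝ × (Fin n → ℝ)) (a : Fin n),
      fderiv ℝ (fun q => π q a) p (1, 0)
        + ∑ j, u p j * fderiv ℝ (fun q => π q a) p (0, Pi.single j 1) = 0) := by
  have hπa := differentiable_pi.mp (hπ.differentiable one_ne_zero)
  have hla := differentiable_pi.mp (hl.differentiable one_ne_zero)
  refine ⟨fun p i => ?_, fun p a => ?_, hadvπ⟩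
  · rw [hclebsch p i]
    exact clebsch_sum_exchange (fun a => hπa a p) (fun a => hla a p)
      (hk.differentiable one_ne_zero p) _
  · change materialDeriv u (fun q => -l q a) p = 0
    rw [materialDeriv_neg, materialDeriv, hadvl p a, neg_zero]

/-- **Exchange symmetry `π ↔ l` of the Clebsch representation up to a gauge
transformation of `k`.**  If `u = -π_a ∇l_a - ∇k` with both Clebsch
variables advected by the flow, then `π' := -l`, `l' := π`,
`k' := k + Σ_a π_a l_a` is again a Clebsch representation of the same
velocity field, with `π'` and `l'` advected by the flow. -/
theorem clebsch_exchange_symmetry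
    {n : ℕ} (hn : 1 ≤ n)
    (u π l : ℝ × (Fin n → ℝ) → (Fin n → ℝ))
    (k : ℝ × (Fin n → ℝ) → ℝ)
    (hu : ContDiff ℝ 1 u) (hπ : ContDiff ℝ 1 π)
    (hl : ContDiff ℝ 1 l) (hk : ContDiff ℝ 1 k)
    (hclebsch : ∀ (p : ℝ × (Fin n → ℝ)) (i : Fin n),
      u p i = -(∑ a, π p a * fderiv ℝ (fun q => l q a) p (0, Pi.single i 1))
              - fderiv ℝ k p (0, Pi.single i 1))
    (hadvπ : ∀ (p : ℝ × (Fin n → ℝ)) (a : Fin n),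
      fderiv ℝ (fun q => π q a) p (1, 0)
        + ∑ j, u p j * fderiv ℝ (fun q => π q a) p (0, Pi.single j 1) = 0)
    (hadvl : ∀ (p : ℝ × (Fin n → ℝ)) (a : Fin n),
      fderiv ℝ (fun q => l q a) p (1, 0)
        + ∑ j, u p j * fderiv ℝ (fun q => l q a) p (0, Pi.single j 1) = 0) :
    (∀ (p : ℝ × (Fin n → ℝ)) (i : Fin n),
      u p i = -(∑ a, (-(l p a)) * fderiv ℝ (fun q => π q a) p (0, Pi.single i 1))
              - fderiv ℝ (fun q => k q + ∑ a, π q a * l q a) p (0, Pi.single i 1)) ∧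
    (∀ (p : ℝ × (Fin n → ℝ)) (a : Fin n),
      fderiv ℝ (fun q => -(l q a)) p (1, 0)
        + ∑ j, u p j * fderiv ℝ (fun q => -(l q a)) p (0, Pi.single j 1) = 0) ∧
    (∀ (p : ℝ × (Fin n → ℝ)) (a : Fin n),
      fderiv ℝ (fun q => π q a) p (1, 0)
        + ∑ j, u p j * fderiv ℝ (fun q => π q a) p (0, Pi.single j 1) = 0) :=
  clebsch_exchange_symmetry_general u π l k hπ hl hk hclebsch hadvπ hadvl
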